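/- arXiv:2505.13570 — 2 statements merged into one kernel-verified Lean document; each statement's English description precedes it below -/
import Mathlib

section
/- Let (a_i)_{i=1}^∞ be a nondecreasing sequence of positive reals with ∑_{i=1}^∞ 1/a_i < ∞ and define γ(s) = max_i a_i s_i for finitely supported sequences s of nonnegative integers. Then sup_s (∑_i s_i)/γ(s), over nonzero finitely supported s, equals ∑_{i=1}^∞ 1/a_i. -/
/-!
Since `s_i ≤ γ(s) / a_i` on the support of `s`, every ratio `(∑ s_i) / γ(s)` is at most
`∑ 1/a_i`. Conversely, for `s_i = ⌈M / a_i⌉` on `{0, …, n}` one has `∑ s_i ≥ M ∑_{i ≤ n} 1/a_i`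
and, by monotonicity, `γ(s) ≤ M + a_n`; letting `M → ∞` recovers every partial sum.
-/

open Filter Finset Topology

namespace AnisotropicSmoothness

section General

variable {ι : Type*} (a : ι → ℝ)

noncomputable def gamma (s : {s : ι →₀ ℕ // s ≠ 0}) : ℝ :=
  s.1.support.sup' (Finsupp.support_nonempty_iff.mpr s.2) (fun i => a i * s.1 i)

noncomputable def ratio (s : {s : ι →₀ ℕ // s ≠ 0}) : ℝ :=
  (∑ i ∈ s.1.support, (s.1 i : ℝ)) / gamma a s

variable {a}

theorem le_gamma (s : {s : ι →₀ ℕ // s ≠ 0}) {i : ι} (hi : i ∈ s.1.support) :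
    a i * s.1 i ≤ gamma a s :=
  Finset.le_sup' (fun i => a i * (s.1 i : ℝ)) hi

theorem gamma_le {s : {s : ι →₀ ℕ // s ≠ 0}} {c : ℝ}
    (h : ∀ i ∈ s.1.support, a i * s.1 i ≤ c) : gamma a s ≤ c :=
  Finset.sup'_le _ _ h

theorem gamma_pos (ha : ∀ i, 0 < a i) (s : {s : ι →₀ ℕ // s ≠ 0}) : 0 < gamma a s := by
  obtain ⟨i, hi⟩ := Finsupp.support_nonempty_iff.mpr s.2
  have hsi : (1 : ℝ) ≤ s.1 i := by
    exact_mod_cast Nat.one_le_iff_ne_zero.mpr (Finsupp.mem_support_iff.mp hi)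
  exact (mul_pos (ha i) (by linarith)).trans_le (le_gamma s hi)

theorem sum_le_gamma_mul_sum_one_div (ha : ∀ i, 0 < a i) (s : {s : ι →₀ ℕ // s ≠ 0}) :
    ∑ i ∈ s.1.support, (s.1 i : ℝ) ≤ gamma a s * ∑ i ∈ s.1.support, 1 / a i := by
  rw [Finset.mul_sum]
  refine Finset.sum_le_sum fun i hi => ?_
  rw [mul_one_div, le_div_iff₀ (ha i), mul_comm]
  exact le_gamma s hi

theorem ratio_le_tsum (ha : ∀ i, 0 < a i) (hsum : Summable fun i => 1 / a i)
    (s : {s : ι →₀ ℕ // s ≠ 0}) : ratio a s ≤ ∑' i, 1 / a i := by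
  have hγ := gamma_pos ha s
  rw [ratio, div_le_iff₀ hγ, mul_comm]
  calc ∑ i ∈ s.1.support, (s.1 i : ℝ)
      ≤ gamma a s * ∑ i ∈ s.1.support, 1 / a i := sum_le_gamma_mul_sum_one_div ha s
    _ ≤ gamma a s * ∑' i, 1 / a i := by
      gcongr
      exact hsum.sum_le_tsum _ fun i _ => (one_div_pos.mpr (ha i)).le

end General

variable {a : ℕ → ℝ}

noncomputable def ceilVec (a : ℕ → ℝ) (n : ℕ) (M : ℝ) : ℕ →₀ ℕ :=
  Finsupp.indicator (range (n + 1)) fun i _ => ⌈M / a i⌉₊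

theorem ceilVec_apply_of_le {n i : ℕ} (M : ℝ) (hi : i ≤ n) : ceilVec a n M i = ⌈M / a i⌉₊ := by
  simp [ceilVec, Finsupp.indicator_apply, Nat.lt_succ_of_le hi]

theorem ceilVec_ne_zero (ha : ∀ i, 0 < a i) (n : ℕ) {M : ℝ} (hM : 0 < M) : ceilVec a n M ≠ 0 :=
  DFunLike.ne_iff.mpr ⟨0, by simpa [ceilVec_apply_of_le M n.zero_le] using div_pos hM (ha 0)⟩

theorem mul_sum_div_le_ratio_ceilVec (ha : ∀ i, 0 < a i) (ha_mono : Monotone a) (n : ℕ)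
    {M : ℝ} (hM : 0 < M) :
    M * (∑ i ∈ range (n + 1), 1 / a i) / (M + a n) ≤ ratio a ⟨_, ceilVec_ne_zero ha n hM⟩ := by
  set s : {s : ℕ →₀ ℕ // s ≠ 0} := ⟨_, ceilVec_ne_zero ha n hM⟩
  have hsupp : s.1.support ⊆ range (n + 1) := Finsupp.support_indicator_subset _ _
  have hsum : M * ∑ i ∈ range (n + 1), 1 / a i ≤ ∑ i ∈ s.1.support, (s.1 i : ℝ) := by
    rw [Finset.sum_subset hsupp fun i _ hi => by simpa using hi, Finset.mul_sum]
    refine Finset.sum_le_sum fun i hi => ?_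
    rw [ceilVec_apply_of_le M (Nat.lt_succ_iff.mp (mem_range.mp hi)), mul_one_div]
    exact Nat.le_ceil _
  have hγ : gamma a s ≤ M + a n := gamma_le fun i hi => by
    have hin := Nat.lt_succ_iff.mp (mem_range.mp (hsupp hi))
    rw [ceilVec_apply_of_le M hin]
    calc a i * ⌈M / a i⌉₊ ≤ a i * (M / a i + 1) :=
          mul_le_mul_of_nonneg_left (Nat.ceil_lt_add_one (div_pos hM (ha i)).le).le (ha i).le
      _ = M + a i := by field_simp [(ha i).ne']
      _ ≤ M + a n := by gcongr; exact ha_mono hin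
  exact div_le_div₀ (sum_nonneg fun i _ => by positivity) hsum (gamma_pos ha s) hγ

theorem sum_range_le_iSup_ratio (ha : ∀ i, 0 < a i) (ha_mono : Monotone a)
    (hbdd : BddAbove (Set.range (ratio a))) (n : ℕ) :
    ∑ i ∈ range (n + 1), 1 / a i ≤ ⨆ s, ratio a s := by
  set P := ∑ i ∈ range (n + 1), 1 / a i
  have hlim : Tendsto (fun M : ℕ => (M : ℝ) / (M + a n) * P) atTop (𝓝 P) := by
    simpa using (tendsto_natCast_div_add_atTop (a n)).mul_const P
  refine le_of_tendsto hlim (eventually_atTop.mpr ⟨1, fun M hM => ?_⟩)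
  have hM : (0 : ℝ) < M := by exact_mod_cast hM
  calc (M : ℝ) / (M + a n) * P = M * P / (M + a n) := div_mul_eq_mul_div _ _ _
    _ ≤ ratio a ⟨_, ceilVec_ne_zero ha n hM⟩ := mul_sum_div_le_ratio_ceilVec ha ha_mono n hM
    _ ≤ ⨆ s, ratio a s := le_ciSup hbdd _

theorem iSup_ratio_eq_tsum (ha : ∀ i, 0 < a i) (ha_mono : Monotone a)
    (hsum : Summable fun i => 1 / a i) : ⨆ s, ratio a s = ∑' i, 1 / a i := by
  have hbdd : BddAbove (Set.range (ratio a)) := ⟨_, Set.forall_mem_range.mpr (ratio_le_tsum ha hsum)⟩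
  have : Nonempty {s : ℕ →₀ ℕ // s ≠ 0} := ⟨⟨Finsupp.single 0 1, by simp⟩⟩
  refine le_antisymm (ciSup_le (ratio_le_tsum ha hsum)) ?_
  refine Real.tsum_le_of_sum_range_le (fun i => (one_div_pos.mpr (ha i)).le) fun n => ?_
  calc ∑ i ∈ range n, 1 / a i ≤ ∑ i ∈ range (n + 1), 1 / a i := by
        rw [sum_range_succ]
        exact le_add_of_nonneg_right (one_div_pos.mpr (ha n)).le
    _ ≤ ⨆ s, ratio a s := sum_range_le_iSup_ratio ha ha_mono hbdd n

end AnisotropicSmoothness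

/-- For a nondecreasing sequence `a` of positive reals with `∑ 1/a_i < ∞` and the
anisotropic smoothness map `γ(s) = max_i a_i s_i`, the supremum over nonzero finitely
supported `s` of `(∑ i s_i)/γ(s)` equals `∑' i, 1 / a i`. -/
theorem stmt_5 (a : ℕ → ℝ) (ha_pos : ∀ i, 0 < a i) (ha_mono : Monotone a)
    (ha_sum : Summable (fun i => 1 / a i)) :
    (⨆ s : {s : ℕ →₀ ℕ // s ≠ 0},
        (∑ i ∈ s.1.support, (s.1 i : ℝ)) /
          (s.1.support.sup' (Finsupp.support_nonempty_iff.mpr s.2)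
            (fun i => a i * s.1 i)))
      = ∑' i, 1 / a i :=
  AnisotropicSmoothness.iSup_ratio_eq_tsum ha_pos ha_mono ha_sum
end

section
/- Let (a_i)_{i=1}^∞ be a sequence of positive reals, J > 0, and α > 0 with α = ∑_i 1/a_i. Then ∑_{s} 2^{∑_i max(s_i − 1, 0)} ≤ 2^{αJ/(1+2α)}, where the sum ranges over all finitely supported sequences s of nonnegative integers satisfying (1 + 2α)·max_i a_i s_i < J. -/
/-!
Every admissible `s` satisfies `s ≤ N` with `N i = ⌊J / ((1 + 2α) a i)⌋`, and `N` is finitely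
supported because `1 / a i → 0`. Enlarging the index set to the box `s ≤ N` only increases the
nonnegative sum, which then factorizes as `∏ i, ∑_{k ≤ N i} 2 ^ (k - 1) = 2 ^ ∑ i, N i`, and
`∑ i, N i ≤ J / (1 + 2α) · ∑ i, 1 / a i = αJ / (1 + 2α)`.
-/

open Finset

theorem Finset.sum_finsupp_prod {ι α R : Type*} [Zero α] [CommSemiring R] (s : Finset ι)
    (t : ι → Finset α) (f : ι → α → R) (hf : ∀ i, f i 0 = 1) :
    ∑ g ∈ s.finsupp t, g.prod f = ∏ i ∈ s, ∑ a ∈ t i, f i a := by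
  classical
  rw [Finset.finsupp, sum_map, prod_sum]
  refine sum_congr rfl fun g _ => ?_
  exact Finsupp.prod_indicator_index_eq_prod_attach _ fun i _ => hf i

theorem Finsupp.sum_Iic_prod {ι α R : Type*} [AddCommMonoid α] [PartialOrder α]
    [IsBotZeroClass α] [OrderBot α] [LocallyFiniteOrder α] [DecidableEq ι] [DecidableEq α]
    [CommSemiring R] (N : ι →₀ α) (f : ι → α → R) (hf : ∀ i, f i 0 = 1) :
    ∑ s ∈ Iic N, s.prod f = ∏ i ∈ N.support, ∑ a ∈ Iic (N i), f i a := by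
  rw [Iic_eq_Icc, bot_eq_zero, Finsupp.Icc_eq, Finsupp.support_zero, empty_union,
    sum_finsupp_prod _ _ _ hf]
  simp [Finsupp.rangeIcc, Iic_eq_Icc, bot_eq_zero]

theorem sum_Iic_two_pow_sub_one (n : ℕ) : ∑ k ∈ Iic n, (2 : ℝ) ^ (k - 1) = 2 ^ n := by
  rw [← Nat.range_succ_eq_Iic]
  induction n with
  | zero => simp
  | succ n ih =>
    rw [sum_range_succ, ih, Nat.add_sub_cancel, pow_succ]
    ring

theorem tsum_subtype_le_sum {β : Type*} {f : β → ℝ} (hf : 0 ≤ f) {P : β → Prop} {t : Finset β}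
    (ht : ∀ x, P x → x ∈ t) : ∑' x : {x // P x}, f x ≤ ∑ x ∈ t, f x := by
  refine Real.tsum_le_of_sum_le (fun x => hf x) fun u => ?_
  have hsub : u.map (Function.Embedding.subtype P) ⊆ t := fun x hx => by
    obtain ⟨y, -, rfl⟩ := mem_map.1 hx
    exact ht y y.2
  calc ∑ x ∈ u, f x = ∑ x ∈ u.map (Function.Embedding.subtype P), f x :=
        (sum_map u (Function.Embedding.subtype P) f).symm
    _ ≤ ∑ x ∈ t, f x := sum_le_sum_of_subset_of_nonneg hsub fun x _ _ => hf x

theorem tsum_two_pow_sum_sub_one_le {ι : Type*} [DecidableEq ι] (N : ι →₀ ℕ)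
    {P : (ι →₀ ℕ) → Prop} (hP : ∀ s, P s → s ≤ N) :
    ∑' s : {s : ι →₀ ℕ // P s}, (2 : ℝ) ^ (∑ i ∈ s.1.support, (s.1 i - 1))
      ≤ 2 ^ ∑ i ∈ N.support, N i := by
  calc ∑' s : {s : ι →₀ ℕ // P s}, (2 : ℝ) ^ (∑ i ∈ s.1.support, (s.1 i - 1))
      = ∑' s : {s : ι →₀ ℕ // P s}, s.1.prod fun _ k => (2 : ℝ) ^ (k - 1) :=
        tsum_congr fun s => (prod_pow_eq_pow_sum _ _ _).symm
    _ ≤ ∑ s ∈ Iic N, s.prod fun _ k => (2 : ℝ) ^ (k - 1) :=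
        tsum_subtype_le_sum (f := fun s : ι →₀ ℕ => s.prod fun _ k => (2 : ℝ) ^ (k - 1))
          (fun _ => prod_nonneg fun _ _ => by positivity) fun s hs => mem_Iic.2 (hP s hs)
    _ = 2 ^ ∑ i ∈ N.support, N i := by
      rw [Finsupp.sum_Iic_prod _ _ fun _ => by simp, ← prod_pow_eq_pow_sum]
      exact prod_congr rfl fun i _ => sum_Iic_two_pow_sub_one (N i)

theorem Summable.finite_support_floor_div {ι : Type*} {a : ι → ℝ}
    (ha : Summable fun i => 1 / a i) (K : ℝ) :
    (Function.support fun i => ⌊K / a i⌋₊).Finite := by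
  have hlt : ∀ᶠ i in Filter.cofinite, K * (1 / a i) < 1 :=
    (ha.tendsto_cofinite_zero.const_mul K).eventually (gt_mem_nhds (by simp))
  refine (Filter.eventually_cofinite.1 hlt).subset fun i hi => ?_
  simp only [Function.mem_support, ne_eq, Nat.floor_eq_zero, not_lt] at hi
  simpa [div_eq_mul_one_div K] using hi

theorem sum_floor_div_le_mul_tsum {ι : Type*} {a : ι → ℝ} (ha : ∀ i, 0 ≤ a i)
    (hs : Summable fun i => 1 / a i) {K : ℝ} (hK : 0 ≤ K) (t : Finset ι) :
    ∑ i ∈ t, (⌊K / a i⌋₊ : ℝ) ≤ K * ∑' i, 1 / a i := by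
  have hai : ∀ i, 0 ≤ 1 / a i := fun i => one_div_nonneg.2 (ha i)
  calc ∑ i ∈ t, (⌊K / a i⌋₊ : ℝ) ≤ ∑ i ∈ t, K * (1 / a i) :=
        sum_le_sum fun i _ => (Nat.floor_le (div_nonneg hK (ha i))).trans_eq (by ring)
    _ = K * ∑ i ∈ t, 1 / a i := (mul_sum _ _ _).symm
    _ ≤ K * ∑' i, 1 / a i := mul_le_mul_of_nonneg_left (hs.sum_le_tsum t fun i _ => hai i) hK

/-- Dyadic counting bound: if `α = ∑ 1/a_i > 0` and `J > 0`, then the sum of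
`2^{∑ (s_i - 1)⁺}` over finitely supported `s` with `(1+2α) a_i s_i < J` for all `i`
is at most `2^{αJ/(1+2α)}`. -/
theorem stmt_6 (a : ℕ → ℝ) (ha_pos : ∀ i, 0 < a i) (J α : ℝ) (hJ : 0 < J)
    (hα : 0 < α) (hαa : α = ∑' i, 1 / a i) :
    (∑' s : {s : ℕ →₀ ℕ // ∀ i, (1 + 2 * α) * (a i * s i) < J},
        (2 : ℝ) ^ (∑ i ∈ s.1.support, (s.1 i - 1)))
      ≤ (2 : ℝ) ^ (α * J / (1 + 2 * α)) := by
  have hc : 0 < 1 + 2 * α := by positivity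
  have hsum : Summable fun i => 1 / a i := by
    -- a non-summable `tsum` is `0`
    by_contra h
    rw [tsum_eq_zero_of_not_summable h] at hαa
    exact hα.ne' hαa
  let N : ℕ →₀ ℕ := Finsupp.ofSupportFinite (fun i => ⌊J / (1 + 2 * α) / a i⌋₊)
    (hsum.finite_support_floor_div _)
  have hle : ∀ s : ℕ →₀ ℕ, (∀ i, (1 + 2 * α) * (a i * s i) < J) → s ≤ N := by
    refine fun s hs => Finsupp.le_def.2 fun i =>
      (Nat.le_floor ?_ : s i ≤ ⌊J / (1 + 2 * α) / a i⌋₊)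
    rw [le_div_iff₀ (ha_pos i), le_div_iff₀ hc]
    linarith [hs i]
  have hNsum : (∑ i ∈ N.support, N i : ℝ) ≤ α * J / (1 + 2 * α) := by
    calc (∑ i ∈ N.support, N i : ℝ) = ∑ i ∈ N.support, (⌊J / (1 + 2 * α) / a i⌋₊ : ℝ) := rfl
      _ ≤ J / (1 + 2 * α) * α := hαa ▸ sum_floor_div_le_mul_tsum (fun i => (ha_pos i).le) hsum
          (div_pos hJ hc).le N.support
      _ = α * J / (1 + 2 * α) := by ring
  calc _ ≤ (2 : ℝ) ^ ∑ i ∈ N.support, N i := tsum_two_pow_sum_sub_one_le N hle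
    _ = (2 : ℝ) ^ ((∑ i ∈ N.support, N i : ℕ) : ℝ) := (Real.rpow_natCast _ _).symm
    _ ≤ _ := Real.rpow_le_rpow_of_exponent_le one_le_two (by exact_mod_cast hNsum)
end
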